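/- arXiv:quant-ph/0310109 — 5 statements merged into one kernel-verified Lean document; each statement's English description precedes it below -/
import Mathlib

section
/- If C1 and C2 are convex cones in a finite-dimensional real vector space and F is a face of the convex hull cone conv(C1, C2), then F ∩ C1 is a face of C1 and F ∩ C2 is a face of C2, and F = conv(F ∩ C1, F ∩ C2). -/
/-- A convex cone: contains 0, closed under nonnegative scalar multiplication and addition. -/
def IsConvexCone {E : Type*} [AddCommMonoid E] [SMul ℝ E] (C : Set E) : Prop :=
  0 ∈ C ∧ (∀ x ∈ C, ∀ r : ℝ, 0 ≤ r → r • x ∈ C) ∧ ∀ x ∈ C, ∀ y ∈ C, x + y ∈ C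

/-- A face of a convex cone: a convex subcone such that `x, y ∈ C` and `x + y ∈ F`
imply `x, y ∈ F`. -/
def IsConeFace {E : Type*} [AddCommMonoid E] [SMul ℝ E] (C F : Set E) : Prop :=
  F ⊆ C ∧ (∀ x ∈ F, ∀ r : ℝ, 0 ≤ r → r • x ∈ F) ∧ (∀ x ∈ F, ∀ y ∈ F, x + y ∈ F) ∧
    ∀ x ∈ C, ∀ y ∈ C, x + y ∈ F → x ∈ F ∧ y ∈ F

/-- The convex cone generated by the union of two convex cones:
`conv(C₁, C₂) = {x₁ + x₂ : x₁ ∈ C₁, x₂ ∈ C₂}`. -/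
def coneJoin {E : Type*} [AddCommMonoid E] (C₁ C₂ : Set E) : Set E :=
  {x | ∃ x₁ ∈ C₁, ∃ x₂ ∈ C₂, x = x₁ + x₂}

section

variable {E : Type*} [AddCommMonoid E]

theorem subset_coneJoin_left {C₁ C₂ : Set E} (h₂ : (0 : E) ∈ C₂) : C₁ ⊆ coneJoin C₁ C₂ :=
  fun x hx => ⟨x, hx, 0, h₂, (add_zero x).symm⟩

theorem subset_coneJoin_right {C₁ C₂ : Set E} (h₁ : (0 : E) ∈ C₁) : C₂ ⊆ coneJoin C₁ C₂ :=
  fun x hx => ⟨0, h₁, x, hx, (zero_add x).symm⟩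

variable [SMul ℝ E]

theorem IsConeFace.inter_of_subset {C D F : Set E} (hF : IsConeFace C F) (hD : IsConvexCone D)
    (hDC : D ⊆ C) : IsConeFace D (F ∩ D) := by
  obtain ⟨-, hsmul, hadd, hface⟩ := hF
  refine ⟨Set.inter_subset_right, ?_, ?_, ?_⟩
  · exact fun x hx r hr => ⟨hsmul x hx.1 r hr, hD.2.1 x hx.2 r hr⟩
  · exact fun x hx y hy => ⟨hadd x hx.1 y hy.1, hD.2.2 x hx.2 y hy.2⟩
  · intro x hx y hy hxy
    obtain ⟨hxF, hyF⟩ := hface x (hDC hx) y (hDC hy) hxy.1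
    exact ⟨⟨hxF, hx⟩, ⟨hyF, hy⟩⟩

theorem IsConeFace.eq_coneJoin_inter {C₁ C₂ F : Set E} (h₁ : (0 : E) ∈ C₁) (h₂ : (0 : E) ∈ C₂)
    (hF : IsConeFace (coneJoin C₁ C₂) F) : F = coneJoin (F ∩ C₁) (F ∩ C₂) := by
  obtain ⟨hsub, -, hadd, hface⟩ := hF
  ext x
  constructor
  · intro hx
    obtain ⟨x₁, hx₁, x₂, hx₂, rfl⟩ := hsub hx
    obtain ⟨hx₁F, hx₂F⟩ :=
      hface x₁ (subset_coneJoin_left h₂ hx₁) x₂ (subset_coneJoin_right h₁ hx₂) hx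
    exact ⟨x₁, ⟨hx₁F, hx₁⟩, x₂, ⟨hx₂F, hx₂⟩, rfl⟩
  · rintro ⟨x₁, hx₁, x₂, hx₂, rfl⟩
    exact hadd x₁ hx₁.1 x₂ hx₂.1

end

theorem face_of_coneJoin_general {E : Type*} [AddCommGroup E] [Module ℝ E]
    (C₁ C₂ F : Set E) (h₁ : IsConvexCone C₁) (h₂ : IsConvexCone C₂)
    (hF : IsConeFace (coneJoin C₁ C₂) F) :
    IsConeFace C₁ (F ∩ C₁) ∧ IsConeFace C₂ (F ∩ C₂) ∧
      F = coneJoin (F ∩ C₁) (F ∩ C₂) :=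
  ⟨hF.inter_of_subset h₁ (subset_coneJoin_left h₂.1),
    hF.inter_of_subset h₂ (subset_coneJoin_right h₁.1),
    hF.eq_coneJoin_inter h₁.1 h₂.1⟩

theorem face_of_coneJoin {E : Type*} [AddCommGroup E] [Module ℝ E] [FiniteDimensional ℝ E]
    (C₁ C₂ F : Set E) (h₁ : IsConvexCone C₁) (h₂ : IsConvexCone C₂)
    (hF : IsConeFace (coneJoin C₁ C₂) F) :
    IsConeFace C₁ (F ∩ C₁) ∧ IsConeFace C₂ (F ∩ C₂) ∧
      F = coneJoin (F ∩ C₁) (F ∩ C₂) :=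
  face_of_coneJoin_general C₁ C₂ F h₁ h₂ hF
end

section
/- Let C be a closed convex cone in a finite-dimensional real inner product space, F a face of C, and x0 a relative interior point of F. Then F′ = {x0}′, i.e., {y ∈ C° : ⟨x, y⟩ = 0 for all x ∈ F} equals {y ∈ C° : ⟨x0, y⟩ = 0}. -/
open RealInnerProductSpace

/-- The dual cone of a subset of a real inner product space. -/
def dualCone {E : Type*} [NormedAddCommGroup E] [InnerProductSpace ℝ E] (C : Set E) : Set E :=
  {y | ∀ x ∈ C, 0 ≤ ⟪x, y⟫}

/-- The dual face `S′` of a subset `S` of a cone `C`, taken inside the dual cone `C°`. -/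
def dualFace {E : Type*} [NormedAddCommGroup E] [InnerProductSpace ℝ E]
    (C S : Set E) : Set E :=
  {y ∈ dualCone C | ∀ x ∈ S, ⟪x, y⟫ = 0}

/-!
A point `x₀` of the relative interior of `F` can be pushed a little beyond itself, away from
any `x ∈ F`, without leaving `F`. If `y ∈ C°` is orthogonal to `x₀`, then `⟪·, y⟫` is
nonnegative on `F ⊆ C`, and evaluating it at `x₀ + ε (x₀ - x) ∈ F` gives `-ε ⟪x, y⟫ ≥ 0`,
so `⟪x, y⟫ = 0`.
-/

open Filter Topology

section IntrinsicInterior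

variable {E : Type*} [AddCommGroup E] [Module ℝ E] [TopologicalSpace E]
  [IsTopologicalAddGroup E] [ContinuousSMul ℝ E] {s : Set E} {x₀ x : E}

lemma exists_pos_add_smul_sub_mem_of_mem_intrinsicInterior
    (hx₀ : x₀ ∈ intrinsicInterior ℝ s) (hx : x ∈ s) :
    ∃ ε : ℝ, 0 < ε ∧ x₀ + ε • (x₀ - x) ∈ s := by
  obtain ⟨p, hp, rfl⟩ := hx₀
  let ray : ℝ → affineSpan ℝ s := fun t =>
    ⟨t • ((p : E) -ᵥ x) +ᵥ (p : E),
      AffineSubspace.smul_vsub_vadd_mem _ t p.2 (subset_affineSpan ℝ s hx) p.2⟩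
  have hray : Continuous ray := by
    refine Continuous.subtype_mk ?_ _
    simp only [vsub_eq_sub, vadd_eq_add]
    fun_prop
  have hnear : ∀ᶠ t in 𝓝 (0 : ℝ), ray t ∈ interior ((↑) ⁻¹' s) :=
    hray.continuousAt.preimage_mem_nhds (by simpa [ray] using isOpen_interior.mem_nhds hp)
  obtain ⟨ε, hε, hεs⟩ := ((hnear.filter_mono nhdsWithin_le_nhds).and
    (self_mem_nhdsWithin : ∀ᶠ t in 𝓝[>] (0 : ℝ), 0 < t)).exists
  refine ⟨ε, hεs, ?_⟩
  simpa [ray, add_comm] using interior_subset hε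

lemma LinearMap.eq_zero_of_nonneg_of_mem_intrinsicInterior (f : E →ₗ[ℝ] ℝ)
    (hf : ∀ x ∈ s, 0 ≤ f x) (hx₀ : x₀ ∈ intrinsicInterior ℝ s) (hfx₀ : f x₀ = 0)
    (hx : x ∈ s) : f x = 0 := by
  obtain ⟨ε, hε, hεs⟩ := exists_pos_add_smul_sub_mem_of_mem_intrinsicInterior hx₀ hx
  have hpushed : f (x₀ + ε • (x₀ - x)) = -(ε * f x) := by
    simp [hfx₀]
  have : 0 ≤ -(ε * f x) := hpushed ▸ hf _ hεs
  exact le_antisymm (nonpos_of_mul_nonpos_right (by linarith) hε) (hf x hx)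

end IntrinsicInterior

theorem dualFace_eq_dualFace_of_mem_intrinsicInterior_general {E : Type*} [NormedAddCommGroup E]
    [InnerProductSpace ℝ E] (C F : Set E)
    (hF : IsConeFace C F)
    (x₀ : E) (hx₀ : x₀ ∈ intrinsicInterior ℝ F) :
    dualFace C F = {y ∈ dualCone C | ⟪x₀, y⟫ = 0} := by
  ext y
  refine ⟨fun ⟨hyC, hyF⟩ => ⟨hyC, hyF x₀ (intrinsicInterior_subset hx₀)⟩,
    fun ⟨hyC, hyx₀⟩ => ⟨hyC, fun x hx => ?_⟩⟩
  exact ((innerₛₗ ℝ).flip y).eq_zero_of_nonneg_of_mem_intrinsicInterior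
    (fun z hz => hyC z (hF.1 hz)) hx₀ hyx₀ hx

theorem dualFace_eq_dualFace_of_mem_intrinsicInterior {E : Type*} [NormedAddCommGroup E]
    [InnerProductSpace ℝ E] [FiniteDimensional ℝ E] (C F : Set E)
    (hC : IsConvexCone C) (hc : IsClosed C) (hF : IsConeFace C F)
    (x₀ : E) (hx₀ : x₀ ∈ intrinsicInterior ℝ F) :
    dualFace C F = {y ∈ dualCone C | ⟪x₀, y⟫ = 0} :=
  dualFace_eq_dualFace_of_mem_intrinsicInterior_general C F hF x₀ hx₀
end

section
/- A face F of a closed convex cone C in a finite-dimensional real inner product space is exposed (i.e., F = x′ for some x ∈ C°) if and only if F = F′′. -/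
open RealInnerProductSpace

/-! Finitely many elements of `F′` span the same subspace as `F′`; their sum `x` lies in `C°`, and
`x′ = F′′`: for `z ∈ C` the summands `⟪z, y⟫` are nonnegative, so their sum vanishes only if each
does, and then `⟪z, ·⟫` vanishes on the whole span of `F′`. -/

section

variable {E : Type*} [NormedAddCommGroup E] [InnerProductSpace ℝ E]

theorem inner_eq_zero_of_mem_span {z y : E} {t : Set E} (h : ∀ w ∈ t, ⟪z, w⟫ = 0)
    (hy : y ∈ Submodule.span ℝ t) : ⟪z, y⟫ = 0 := by
  have hspan : Submodule.span ℝ t ≤ LinearMap.ker (innerₛₗ ℝ z) := Submodule.span_le.mpr h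
  simpa using hspan hy

theorem exposed_eq_double_dualFace {C : Set E} {x : E} (hx : x ∈ dualCone C) :
    {z ∈ C | ⟪z, x⟫ = 0} =
      {z ∈ C | ∀ y ∈ dualFace C {z ∈ C | ⟪z, x⟫ = 0}, ⟪z, y⟫ = 0} :=
  Set.ext fun z => and_congr_right fun _ =>
    ⟨fun hz _ hy => hy.2 z ⟨‹_›, hz⟩, fun hz => hz x ⟨hx, fun _ hw => hw.2⟩⟩

theorem exists_mem_dualCone_inner_eq_zero_iff [FiniteDimensional ℝ E] {C T : Set E}
    (hT : T ⊆ dualCone C) :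
    ∃ x ∈ dualCone C, ∀ z ∈ C, ⟪z, x⟫ = 0 ↔ ∀ y ∈ T, ⟪z, y⟫ = 0 := by
  obtain ⟨s, hsT, hspan⟩ :=
    (Submodule.fg_span_iff_fg_span_finset_subset T).mp (IsNoetherian.noetherian (R := ℝ) _)
  have hs : ∀ y ∈ s, y ∈ dualCone C := fun y hy => hT (hsT hy)
  have inner_sum_eq (z : E) : ⟪z, ∑ y ∈ s, y⟫ = ∑ y ∈ s, ⟪z, y⟫ := inner_sum _ _ _
  refine ⟨∑ y ∈ s, y, fun z hz => ?_, fun z hz => ?_⟩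
  · rw [inner_sum_eq]
    exact Finset.sum_nonneg fun y hy => hs y hy z hz
  · rw [inner_sum_eq, Finset.sum_eq_zero_iff_of_nonneg fun y hy => hs y hy z hz]
    refine ⟨fun h y hy => inner_eq_zero_of_mem_span h ?_, fun h y hy => h y (hsT hy)⟩
    exact hspan ▸ Submodule.subset_span hy

end

theorem exposed_iff_eq_double_dualFace_general {E : Type*} [NormedAddCommGroup E]
    [InnerProductSpace ℝ E] [FiniteDimensional ℝ E] (C F : Set E) :
    (∃ x ∈ dualCone C, F = {z ∈ C | ⟪z, x⟫ = 0}) ↔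
      F = {z ∈ C | ∀ y ∈ dualFace C F, ⟪z, y⟫ = 0} := by
  constructor
  · rintro ⟨x, hx, rfl⟩
    exact exposed_eq_double_dualFace hx
  · intro hF
    obtain ⟨x, hx, hzero⟩ :=
      exists_mem_dualCone_inner_eq_zero_iff fun _ (hy : _ ∈ dualFace C F) => hy.1
    exact ⟨x, hx, hF.trans (Set.ext fun z => and_congr_right fun hz => (hzero z hz).symm)⟩

theorem exposed_iff_eq_double_dualFace {E : Type*} [NormedAddCommGroup E]
    [InnerProductSpace ℝ E] [FiniteDimensional ℝ E] (C F : Set E)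
    (hC : IsConvexCone C) (hc : IsClosed C) (hF : IsConeFace C F) :
    (∃ x ∈ dualCone C, F = {z ∈ C | ⟪z, x⟫ = 0}) ↔
      F = {z ∈ C | ∀ y ∈ dualFace C F, ⟪z, y⟫ = 0} :=
  exposed_iff_eq_double_dualFace_general C F
end

section
/- For m×n complex matrices z and V, the pairing of the partial transpose (z̃ z̃*)^τ with the completely copositive map φ^V : X ↦ V* Xᵗ V equals |(z | V)|². -/
open Matrix Kronecker ComplexConjugate ComplexOrder

/-- The vectorization `z̃` of an `m × n` matrix `z`: `z̃ = Σᵢ zᵢ ⊗ eᵢ ∈ ℂⁿ ⊗ ℂᵐ`,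
so that the `(k, i)` coordinate of `z̃` is `z i k`. -/
def vecz {m n : ℕ} (z : Matrix (Fin m) (Fin n) ℂ) : Fin n × Fin m → ℂ :=
  fun p => z p.2 p.1

/-- The partial transpose (block transpose) of an element of `M_n ⊗ M_m`, viewed as a
matrix indexed by `Fin n × Fin m`: the block `a_{ij}` is sent to `a_{ji}`. -/
def ptr {m n : ℕ} (A : Matrix (Fin n × Fin m) (Fin n × Fin m) ℂ) :
    Matrix (Fin n × Fin m) (Fin n × Fin m) ℂ :=
  Matrix.of fun p q => A (p.1, q.2) (q.1, p.2)

/-- The bilinear pairing `⟨A, φ⟩ = Σ_{i,j} ⟨φ(e_{ij}), a_{ij}⟩` between block matrices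
in `M_n ⊗ M_m` and maps `φ : M_m → M_n`, where `⟨X, Y⟩ = Tr(Y Xᵗ)`. -/
noncomputable def matPairing {m n : ℕ} (A : Matrix (Fin n × Fin m) (Fin n × Fin m) ℂ)
    (φ : Matrix (Fin m) (Fin m) ℂ → Matrix (Fin n) (Fin n) ℂ) : ℂ :=
  ∑ i : Fin m, ∑ j : Fin m, ∑ k : Fin n, ∑ l : Fin n,
    φ (Matrix.single i j 1) k l * A (k, i) (l, j)

open Finset

theorem Matrix.mul_single_mul_apply {l m n o α : Type*} [Fintype m] [Fintype n] [DecidableEq m]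
    [DecidableEq n] [NonUnitalNonAssocSemiring α] (A : Matrix l m α) (i : m) (j : n) (c : α)
    (B : Matrix n o α) (a : l) (b : o) :
    (A * single i j c * B) a b = A a i * c * B j b := by
  simp [mul_apply, single_apply, ite_and]

theorem matPairing_conjTranspose_transpose_mul {m n : ℕ}
    (A : Matrix (Fin n × Fin m) (Fin n × Fin m) ℂ) (V : Matrix (Fin m) (Fin n) ℂ) :
    matPairing A (fun X => Vᴴ * Xᵀ * V)
      = ∑ i : Fin m, ∑ j : Fin m, ∑ k : Fin n, ∑ l : Fin n,
          conj (V j k) * V i l * A (k, i) (l, j) := by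
  simp [matPairing, transpose_single, mul_single_mul_apply]

theorem ptr_vecz_rankOne_apply {m n : ℕ} (z : Matrix (Fin m) (Fin n) ℂ) (i j : Fin m)
    (k l : Fin n) :
    ptr (of fun p q => vecz z p * conj (vecz z q)) (k, i) (l, j) = z j k * conj (z i l) :=
  rfl

theorem pairing_rankone_ptr_cocp (m n : ℕ) (z V : Matrix (Fin m) (Fin n) ℂ) :
    matPairing (ptr (Matrix.of fun p q => vecz z p * conj (vecz z q)))
        (fun X => Vᴴ * Xᵀ * V)
      = (Complex.normSq (∑ i : Fin m, ∑ k : Fin n, z i k * conj (V i k)) : ℂ) := by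
  rw [matPairing_conjTranspose_transpose_mul, ← Complex.mul_conj]
  -- the quadruple sum factors as `(z | V) * conj (z | V)`
  simp only [ptr_vecz_rankOne_apply, map_sum, map_mul, Complex.conj_conj, sum_mul_sum]
  rw [sum_comm]
  refine sum_congr rfl fun j _ => sum_congr rfl fun i _ => sum_congr rfl fun k _ =>
    sum_congr rfl fun l _ => ?_
  ring
end

section
/- Let A be a positive semi-definite matrix in M_n ⊗ M_m with positive semi-definite partial transpose, and suppose the dual face A′ of A in the cone of decomposable maps equals conv(Φ_D, Φ^E) with conv(Φ_D, Φ^E) ∩ CP = Φ_D and conv(Φ_D, Φ^E) ∩ coCP = Φ^E. Then the range of A equals the orthogonal complement of D̃ and the range of A^τ equals the orthogonal complement of Ẽ. -/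
/-!
The rank-one map `X ↦ z* X z` is completely positive and pairs with `A` to `⟨z̃, A z̃⟩`; as `A ⪰ 0`,
this vanishes iff `A z̃ = 0`. So the hypotheses on the dual face say exactly that such a map lies
in `Φ_D` iff `A z̃ = 0`. In particular `D̃ ⊆ ker A`, and for `w̃ ∈ ker A` the Choi matrix of the
map gives `w̃ w̃* = Σ ṽᵢ ṽᵢ*` with `vᵢ ∈ D`, so every vector orthogonal to `D̃` is orthogonal to
`w̃`. Hence `ran A = (ker A)^⊥ = D̃^⊥`. The maps `X ↦ z* Xᵗ z` pair with `A` as `X ↦ z* X z` pairs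
with `A^τ`, and the same argument gives `ran A^τ = Ẽ^⊥`.
-/

open Matrix Kronecker ComplexConjugate ComplexOrder

/-- The cone of completely positive maps `M_m → M_n`:
maps of the form `X ↦ Σᵢ Vᵢ* X Vᵢ`. -/
def CPmaps (m n : ℕ) : Set (Matrix (Fin m) (Fin m) ℂ → Matrix (Fin n) (Fin n) ℂ) :=
  {φ | ∃ (N : ℕ) (V : Fin N → Matrix (Fin m) (Fin n) ℂ),
    ∀ X, φ X = ∑ i, (V i)ᴴ * X * V i}

/-- The cone of completely copositive maps `M_m → M_n`:
maps of the form `X ↦ Σᵢ Vᵢ* Xᵗ Vᵢ`. -/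
def coCPmaps (m n : ℕ) : Set (Matrix (Fin m) (Fin m) ℂ → Matrix (Fin n) (Fin n) ℂ) :=
  {φ | ∃ (N : ℕ) (V : Fin N → Matrix (Fin m) (Fin n) ℂ),
    ∀ X, φ X = ∑ i, (V i)ᴴ * Xᵀ * V i}

/-- The face `Φ_D` of the completely positive cone determined by a subspace
`D ⊆ M_{m×n}`. -/
def PhiCP {m n : ℕ} (D : Submodule ℂ (Matrix (Fin m) (Fin n) ℂ)) :
    Set (Matrix (Fin m) (Fin m) ℂ → Matrix (Fin n) (Fin n) ℂ) :=
  {φ | ∃ (N : ℕ) (V : Fin N → Matrix (Fin m) (Fin n) ℂ),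
    (∀ i, V i ∈ D) ∧ ∀ X, φ X = ∑ i, (V i)ᴴ * X * V i}

/-- The face `Φ^E` of the completely copositive cone determined by a subspace
`E ⊆ M_{m×n}`. -/
def PhiCoCP {m n : ℕ} (E : Submodule ℂ (Matrix (Fin m) (Fin n) ℂ)) :
    Set (Matrix (Fin m) (Fin m) ℂ → Matrix (Fin n) (Fin n) ℂ) :=
  {φ | ∃ (N : ℕ) (V : Fin N → Matrix (Fin m) (Fin n) ℂ),
    (∀ i, V i ∈ E) ∧ ∀ X, φ X = ∑ i, (V i)ᴴ * Xᵀ * V i}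

/-- The convex hull `conv(S, T) = {φ₁ + φ₂ : φ₁ ∈ S, φ₂ ∈ T}` of two cones. -/
def convJoin {α : Type*} [Add α] (S T : Set α) : Set α :=
  {φ | ∃ φ₁ ∈ S, ∃ φ₂ ∈ T, φ = φ₁ + φ₂}

/-- The cone `𝔻` of decomposable maps: sums of a completely positive and a completely
copositive map. -/
def decMaps (m n : ℕ) : Set (Matrix (Fin m) (Fin m) ℂ → Matrix (Fin n) (Fin n) ℂ) :=
  convJoin (CPmaps m n) (coCPmaps m n)

/-- The cone `𝕋` of positive semi-definite block matrices whose partial transpose is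
also positive semi-definite. -/
def TTcone (m n : ℕ) : Set (Matrix (Fin n × Fin m) (Fin n × Fin m) ℂ) :=
  {A | A.PosSemidef ∧ (ptr A).PosSemidef}

namespace Matrix

variable {𝕜 ι : Type*} [RCLike 𝕜] [Fintype ι]

theorem IsHermitian.range_mulVec_eq [DecidableEq ι] {B : Matrix ι ι 𝕜} (hB : B.IsHermitian) :
    Set.range B.mulVec = {v | ∀ w, B *ᵥ w = 0 → v ⬝ᵥ star w = 0} := by
  ext v
  have hrange : v ∈ Set.range B.mulVec ↔
      WithLp.toLp 2 v ∈ (LinearMap.ker (toEuclideanLin B))ᗮ := by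
    rw [← (isSymmetric_toEuclideanLin_iff.mpr hB).orthogonal_range,
      Submodule.orthogonal_orthogonal]
    exact ⟨fun ⟨u, hu⟩ => ⟨WithLp.toLp 2 u, by rw [← hu]; rfl⟩,
      fun ⟨u, hu⟩ => ⟨u.ofLp, congrArg WithLp.ofLp hu⟩⟩
  rw [hrange, Submodule.mem_orthogonal]
  exact ⟨fun h w hw => h (WithLp.toLp 2 w) (congrArg (WithLp.toLp 2) hw),
    fun h w hw => h w.ofLp (congrArg WithLp.ofLp hw)⟩

theorem dotProduct_star_eq_zero_of_vecMulVec_eq_sum {N : ℕ} {u c : ι → 𝕜} {v : Fin N → ι → 𝕜}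
    (h : vecMulVec (star u) u = ∑ r, vecMulVec (star (v r)) (v r))
    (hc : ∀ r, c ⬝ᵥ star (v r) = 0) : c ⬝ᵥ star u = 0 := by
  have quad : ∀ x : ι → 𝕜,
      c ⬝ᵥ vecMulVec (star x) x *ᵥ star c = (c ⬝ᵥ star x) * star (c ⬝ᵥ star x) := by
    intro x
    rw [vecMulVec_mulVec, dotProduct_star x c]
    simp [dotProduct, Finset.sum_mul, mul_assoc]
  have := congrArg (fun M => c ⬝ᵥ M *ᵥ star c) h
  simp only [quad, sum_mulVec, dotProduct_sum, hc, zero_mul, Finset.sum_const_zero] at this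
  exact (CStarRing.mul_star_self_eq_zero_iff _).mp this

theorem mul_single_one_mul_apply {l m n α : Type*} [Fintype m] [DecidableEq m] [Semiring α]
    (M : Matrix l m α) (N : Matrix m n α) (i j : m) (a : l) (b : n) :
    (M * single i j (1 : α) * N) a b = M a i * N j b := by
  simp [mul_apply, single, ite_and, mul_ite, ite_mul, Finset.sum_ite_eq]

end Matrix

def choi {m n : ℕ} (φ : Matrix (Fin m) (Fin m) ℂ → Matrix (Fin n) (Fin n) ℂ) :
    Matrix (Fin n × Fin m) (Fin n × Fin m) ℂ :=
  Matrix.of fun p q => φ (Matrix.single p.2 q.2 1) p.1 q.1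

section Choi

variable {m n : ℕ}

theorem matPairing_eq_sum_choi (A : Matrix (Fin n × Fin m) (Fin n × Fin m) ℂ)
    (φ : Matrix (Fin m) (Fin m) ℂ → Matrix (Fin n) (Fin n) ℂ) :
    matPairing A φ = ∑ p, ∑ q, choi φ p q * A p q :=
  calc matPairing A φ
      = ∑ i, ∑ k, ∑ j, ∑ l, φ (single i j 1) k l * A (k, i) (l, j) :=
        Fintype.sum_congr _ _ fun _ => Finset.sum_comm
    _ = ∑ k, ∑ i, ∑ l, ∑ j, φ (single i j 1) k l * A (k, i) (l, j) :=
        Finset.sum_comm.trans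
          (Fintype.sum_congr _ _ fun _ => Fintype.sum_congr _ _ fun _ => Finset.sum_comm)
    _ = ∑ p, ∑ q, choi φ p q * A p q := by simp only [choi, of_apply, Fintype.sum_prod_type]

theorem matPairing_comp_transpose (A : Matrix (Fin n × Fin m) (Fin n × Fin m) ℂ)
    (φ : Matrix (Fin m) (Fin m) ℂ → Matrix (Fin n) (Fin n) ℂ) :
    matPairing A (fun X => φ Xᵀ) = matPairing (ptr A) φ := by
  simp only [matPairing, transpose_single, ptr, of_apply]
  exact Finset.sum_comm

theorem choi_kraus {N : ℕ} {φ : Matrix (Fin m) (Fin m) ℂ → Matrix (Fin n) (Fin n) ℂ}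
    {V : Fin N → Matrix (Fin m) (Fin n) ℂ} (hφ : ∀ X, φ X = ∑ i, (V i)ᴴ * X * V i) :
    choi φ = ∑ i, vecMulVec (star (vecz (V i))) (vecz (V i)) := by
  ext p q
  simp [choi, hφ, Matrix.sum_apply, mul_single_one_mul_apply, vecMulVec, vecz]

theorem choi_rankOne (z : Matrix (Fin m) (Fin n) ℂ) :
    choi (fun X => zᴴ * X * z) = vecMulVec (star (vecz z)) (vecz z) := by
  simpa using choi_kraus (V := fun _ : Fin 1 => z) (fun X => by simp)

theorem matPairing_rankOne (A : Matrix (Fin n × Fin m) (Fin n × Fin m) ℂ)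
    (z : Matrix (Fin m) (Fin n) ℂ) :
    matPairing A (fun X => zᴴ * X * z) = star (vecz z) ⬝ᵥ A *ᵥ vecz z := by
  simp only [matPairing_eq_sum_choi, choi_rankOne, dotProduct, mulVec, vecMulVec, of_apply,
    Finset.mul_sum]
  exact Fintype.sum_congr _ _ fun _ => Fintype.sum_congr _ _ fun _ => by ring

theorem matPairing_rankOne_transpose (A : Matrix (Fin n × Fin m) (Fin n × Fin m) ℂ)
    (z : Matrix (Fin m) (Fin n) ℂ) :
    matPairing A (fun X => zᴴ * Xᵀ * z) = star (vecz z) ⬝ᵥ ptr A *ᵥ vecz z :=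
  (matPairing_comp_transpose A fun X => zᴴ * X * z).trans (matPairing_rankOne _ z)

theorem range_mulVec_eq_orthogonal_vecz {B : Matrix (Fin n × Fin m) (Fin n × Fin m) ℂ}
    (hB : B.IsHermitian) (D : Submodule ℂ (Matrix (Fin m) (Fin n) ℂ))
    (hD : ∀ z ∈ D, B *ᵥ vecz z = 0)
    (hker : ∀ w, B *ᵥ vecz w = 0 → (fun X => wᴴ * X * w) ∈ PhiCP D) :
    Set.range B.mulVec = {v | ∀ z ∈ D, ∑ p : Fin n × Fin m, v p * conj (vecz z p) = 0} := by
  rw [hB.range_mulVec_eq]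
  ext v
  refine ⟨fun hv z hz => hv _ (hD z hz), fun hv w hw => ?_⟩
  obtain ⟨z, rfl⟩ : ∃ z : Matrix (Fin m) (Fin n) ℂ, vecz z = w := ⟨of fun i k => w (k, i), rfl⟩
  obtain ⟨N, V, hVD, hV⟩ := hker z hw
  exact dotProduct_star_eq_zero_of_vecMulVec_eq_sum (c := v)
    (by rw [← choi_rankOne, choi_kraus hV]) fun r => hv _ (hVD r)

end Choi

theorem left_mem_convJoin {α : Type*} [AddZeroClass α] {S T : Set α} {a : α} (ha : a ∈ S)
    (hT : (0 : α) ∈ T) : a ∈ convJoin S T :=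
  ⟨a, ha, 0, hT, (add_zero a).symm⟩

theorem right_mem_convJoin {α : Type*} [AddZeroClass α] {S T : Set α} {b : α}
    (hS : (0 : α) ∈ S) (hb : b ∈ T) : b ∈ convJoin S T :=
  ⟨0, hS, b, hb, (zero_add b).symm⟩

section Faces

variable {m n : ℕ}

theorem zero_mem_PhiCP (D : Submodule ℂ (Matrix (Fin m) (Fin n) ℂ)) : 0 ∈ PhiCP D :=
  ⟨0, Fin.elim0, fun i => i.elim0, fun _ => by simp⟩

theorem zero_mem_PhiCoCP (E : Submodule ℂ (Matrix (Fin m) (Fin n) ℂ)) : 0 ∈ PhiCoCP E :=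
  ⟨0, Fin.elim0, fun i => i.elim0, fun _ => by simp⟩

theorem rankOne_mem_PhiCP {D : Submodule ℂ (Matrix (Fin m) (Fin n) ℂ)}
    {z : Matrix (Fin m) (Fin n) ℂ} (hz : z ∈ D) : (fun X => zᴴ * X * z) ∈ PhiCP D :=
  ⟨1, fun _ => z, fun _ => hz, fun _ => by simp⟩

theorem rankOne_mem_PhiCoCP {E : Submodule ℂ (Matrix (Fin m) (Fin n) ℂ)}
    {z : Matrix (Fin m) (Fin n) ℂ} (hz : z ∈ E) : (fun X => zᴴ * Xᵀ * z) ∈ PhiCoCP E :=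
  ⟨1, fun _ => z, fun _ => hz, fun _ => by simp⟩

theorem rankOne_mem_CPmaps (z : Matrix (Fin m) (Fin n) ℂ) :
    (fun X => zᴴ * X * z) ∈ CPmaps m n :=
  ⟨1, fun _ => z, fun _ => by simp⟩

theorem rankOne_mem_coCPmaps (z : Matrix (Fin m) (Fin n) ℂ) :
    (fun X => zᴴ * Xᵀ * z) ∈ coCPmaps m n :=
  ⟨1, fun _ => z, fun _ => by simp⟩

theorem CPmaps_subset_decMaps : CPmaps m n ⊆ decMaps m n :=
  fun _ hφ => left_mem_convJoin hφ ⟨0, Fin.elim0, fun _ => by simp⟩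

theorem coCPmaps_subset_decMaps : coCPmaps m n ⊆ decMaps m n :=
  fun _ hφ => right_mem_convJoin ⟨0, Fin.elim0, fun _ => by simp⟩ hφ

theorem mem_PhiCP_of_comp_transpose_mem_PhiCoCP {E : Submodule ℂ (Matrix (Fin m) (Fin n) ℂ)}
    {φ : Matrix (Fin m) (Fin m) ℂ → Matrix (Fin n) (Fin n) ℂ}
    (h : (fun X => φ Xᵀ) ∈ PhiCoCP E) : φ ∈ PhiCP E :=
  let ⟨N, V, hVE, hV⟩ := h
  ⟨N, V, hVE, fun X => by simpa using hV Xᵀ⟩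

end Faces

theorem range_eq_of_dualFace_eq (m n : ℕ) (A : Matrix (Fin n × Fin m) (Fin n × Fin m) ℂ)
    (D E : Submodule ℂ (Matrix (Fin m) (Fin n) ℂ))
    (hA : A.PosSemidef) (hAτ : (ptr A).PosSemidef)
    (hdual : {φ ∈ decMaps m n | matPairing A φ = 0} = convJoin (PhiCP D) (PhiCoCP E))
    (hcapCP : convJoin (PhiCP D) (PhiCoCP E) ∩ CPmaps m n = PhiCP D)
    (hcapCoCP : convJoin (PhiCP D) (PhiCoCP E) ∩ coCPmaps m n = PhiCoCP E) :
    Set.range A.mulVec = {v | ∀ z ∈ D, ∑ p : Fin n × Fin m, v p * conj (vecz z p) = 0} ∧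
    Set.range (ptr A).mulVec
      = {v | ∀ z ∈ E, ∑ p : Fin n × Fin m, v p * conj (vecz z p) = 0} := by
  have hface : ∀ φ ∈ convJoin (PhiCP D) (PhiCoCP E), matPairing A φ = 0 :=
    fun φ hφ => (hdual.symm ▸ hφ : φ ∈ {φ ∈ decMaps m n | matPairing A φ = 0}).2
  have hdec : ∀ φ ∈ decMaps m n, matPairing A φ = 0 → φ ∈ convJoin (PhiCP D) (PhiCoCP E) :=
    fun φ hφ h0 => hdual ▸ ⟨hφ, h0⟩
  refine ⟨range_mulVec_eq_orthogonal_vecz hA.1 D (fun z hz => ?_) (fun w hw => ?_),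
    range_mulVec_eq_orthogonal_vecz hAτ.1 E (fun z hz => ?_) (fun w hw => ?_)⟩
  · rw [← hA.dotProduct_mulVec_zero_iff, ← matPairing_rankOne]
    exact hface _ (left_mem_convJoin (rankOne_mem_PhiCP hz) (zero_mem_PhiCoCP E))
  · rw [← hcapCP]
    refine ⟨hdec _ (CPmaps_subset_decMaps (rankOne_mem_CPmaps w)) ?_, rankOne_mem_CPmaps w⟩
    rw [matPairing_rankOne, hw, dotProduct_zero]
  · rw [← hAτ.dotProduct_mulVec_zero_iff, ← matPairing_rankOne_transpose]
    exact hface _ (right_mem_convJoin (zero_mem_PhiCP D) (rankOne_mem_PhiCoCP hz))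
  · refine mem_PhiCP_of_comp_transpose_mem_PhiCoCP ?_
    rw [← hcapCoCP]
    refine ⟨hdec _ (coCPmaps_subset_decMaps (rankOne_mem_coCPmaps w)) ?_, rankOne_mem_coCPmaps w⟩
    rw [matPairing_rankOne_transpose, hw, dotProduct_zero]
end
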